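/- Let K be the operator on bounded measurable functions f : [0,1] → ℝ given by Kf(s) := (2/(2β+1))·[∫_s^1 x^{2β}·f(s/x) dx + ∫_0^s (1−x)^{2β}·f((1−s)/(1−x)) dx] + 2·B(β+1, β+1)·h(s)²/(β+1). If f : [0,1] → ℝ is bounded and measurable and satisfies Kf(s) = f(s) for every s ∈ [0,1], then f(s) = c₂·(s(1−s))^β for every s ∈ [0,1], where c₂ := 2·B(β+1, β+1)·(2β+1)/(3(1−β)). In other words, the integral equation for the second moment of the limit process has a unique bounded measurable solution. -/

import Mathlib

open MeasureTheory Real Set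

/-- The exponent `β = (√17 - 3)/2`, the positive root of `(β+1)(β+2) = 4`. -/
noncomputable def β : ℝ := (Real.sqrt 17 - 3) / 2

/-- The scaling function `h(s) = (s(1-s))^{β/2}`. -/
noncomputable def h (s : ℝ) : ℝ := (s * (1 - s)) ^ (β / 2)

/-- The Beta function `B(a,b) = ∫₀¹ t^{a-1}(1-t)^{b-1} dt`. -/
noncomputable def Bfun (a b : ℝ) : ℝ := ∫ t in (0:ℝ)..1, t ^ (a - 1) * (1 - t) ^ (b - 1)

/-- The second-moment integral operator `K`. -/
noncomputable def K (f : ℝ → ℝ) (s : ℝ) : ℝ :=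
  (2 / (2 * β + 1)) *
      ((∫ x in s..1, x ^ (2 * β) * f (s / x)) +
        ∫ x in (0:ℝ)..s, (1 - x) ^ (2 * β) * f ((1 - s) / (1 - x)))
    + 2 * Bfun (β + 1) (β + 1) * (h s) ^ 2 / (β + 1)

/-- The constant `c₂ = 2 B(β+1,β+1)(2β+1)/(3(1-β))`. -/
noncomputable def c₂ : ℝ := 2 * Bfun (β + 1) (β + 1) * (2 * β + 1) / (3 * (1 - β))

/-!
Since `K` is affine, `K f - K g` is the linear operator `L` applied to `f - g`. Substituting
`x ↦ 1 - x` in the second integral, each of the two integrals of a function bounded by `M` on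
`[0,1]` is at most `M ∫ₛ¹ x^{2β} dx ≤ M / (2β + 1)`, so `‖L g‖∞ ≤ 4/(2β+1)² ‖g‖∞`, and
`4/(2β+1)² < 1` because `β > 1/2`. A direct computation with `∫ₛ¹ x^{2β} ((s/x)(1 - s/x))^β dx =
s^β (1-s)^{β+1}/(β+1)` shows that `c₂ (s(1-s))^β` is a fixed point of `K`; the difference of
two bounded fixed points is then a fixed point of the contraction `L`, hence zero.
-/

open Filter Topology

lemma four_lt_sqrt_seventeen : (4 : ℝ) < √17 := by
  rw [show (4 : ℝ) = √(4 ^ 2) by simp]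
  exact Real.sqrt_lt_sqrt (by norm_num) (by norm_num)

lemma sqrt_seventeen_lt_five : √17 < 5 := by
  rw [show (5 : ℝ) = √(5 ^ 2) by simp]
  exact Real.sqrt_lt_sqrt (by norm_num) (by norm_num)

lemma one_half_lt_β : 1 / 2 < β := by
  unfold β; linarith [four_lt_sqrt_seventeen]

lemma β_lt_one : β < 1 := by
  unfold β; linarith [sqrt_seventeen_lt_five]

lemma β_pos : 0 < β := by linarith [one_half_lt_β]

lemma β_sq_add_three_mul : β ^ 2 + 3 * β = 2 := by
  unfold β; nlinarith [Real.sq_sqrt (show (0 : ℝ) ≤ 17 by norm_num)]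

lemma four_div_two_mul_β_add_one_sq_lt_one : 4 / (2 * β + 1) ^ 2 < 1 := by
  rw [div_lt_one (by nlinarith [β_pos])]
  nlinarith [one_half_lt_β]

lemma eq_zero_of_forall_abs_le_mul {α : Type*} {S : Set α} {g : α → ℝ} {q : ℝ} (hq₀ : 0 ≤ q)
    (hq₁ : q < 1) (hbdd : ∃ M, ∀ s ∈ S, |g s| ≤ M)
    (hcontr : ∀ M, (∀ s ∈ S, |g s| ≤ M) → ∀ s ∈ S, |g s| ≤ q * M) :
    ∀ s ∈ S, g s = 0 := by
  obtain ⟨M, hM⟩ := hbdd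
  have hpow : ∀ n : ℕ, ∀ s ∈ S, |g s| ≤ q ^ n * M := by
    intro n
    induction n with
    | zero => simpa using hM
    | succ n ih => simpa only [pow_succ', mul_assoc] using hcontr _ ih
  intro s hs
  have hlim : Tendsto (fun n : ℕ ↦ q ^ n * M) atTop (𝓝 0) := by
    simpa using (tendsto_pow_atTop_nhds_zero_of_lt_one hq₀ hq₁).mul_const M
  exact abs_nonpos_iff.mp (ge_of_tendsto' hlim fun n ↦ hpow n s hs)

/-- The first integral in `K`; the second one is this at `1 - s` (substitute `x ↦ 1 - x`). -/
noncomputable def dilationIntegral (a : ℝ) (g : ℝ → ℝ) (s : ℝ) : ℝ :=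
  ∫ x in s..1, x ^ a * g (s / x)

section DilationIntegral

variable {a s M : ℝ} {g : ℝ → ℝ}

lemma div_mem_Icc_zero_one (hs : 0 ≤ s) {x : ℝ} (hx : x ∈ Icc s 1) : s / x ∈ Icc (0 : ℝ) 1 :=
  ⟨div_nonneg hs (hs.trans hx.1), div_le_one_of_le₀ hx.1 (hs.trans hx.1)⟩

lemma abs_rpow_mul_comp_div_le (hs : 0 ≤ s) (hg : ∀ t ∈ Icc (0 : ℝ) 1, |g t| ≤ M)
    {x : ℝ} (hx : x ∈ Icc s 1) : |x ^ a * g (s / x)| ≤ M * x ^ a := by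
  have hxa : 0 ≤ x ^ a := Real.rpow_nonneg (hs.trans hx.1) a
  rw [abs_mul, abs_of_nonneg hxa, mul_comm]
  exact mul_le_mul_of_nonneg_right (hg _ (div_mem_Icc_zero_one hs hx)) hxa

lemma intervalIntegrable_rpow_mul_comp_div (ha : 0 ≤ a) (hg : Measurable g)
    (hgM : ∀ t ∈ Icc (0 : ℝ) 1, |g t| ≤ M) (hs : s ∈ Icc (0 : ℝ) 1) :
    IntervalIntegrable (fun x ↦ x ^ a * g (s / x)) volume s 1 := by
  have hM : 0 ≤ M := (abs_nonneg _).trans (hgM 0 (left_mem_Icc.mpr zero_le_one))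
  rw [intervalIntegrable_iff_integrableOn_Icc_of_le hs.2]
  refine Measure.integrableOn_of_bounded measure_Icc_lt_top.ne (by fun_prop) (M := M) ?_
  refine ae_restrict_of_forall_mem measurableSet_Icc fun x hx ↦ ?_
  have hxa : x ^ a ≤ 1 := Real.rpow_le_one (hs.1.trans hx.1) hx.2 ha
  calc ‖x ^ a * g (s / x)‖ ≤ M * x ^ a := abs_rpow_mul_comp_div_le hs.1 hgM hx
    _ ≤ M := mul_le_of_le_one_right hM hxa

lemma abs_dilationIntegral_le (ha : 0 ≤ a) (hg : Measurable g)
    (hgM : ∀ t ∈ Icc (0 : ℝ) 1, |g t| ≤ M) (hs : s ∈ Icc (0 : ℝ) 1) :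
    |dilationIntegral a g s| ≤ M / (a + 1) := by
  have hM : 0 ≤ M := (abs_nonneg _).trans (hgM 0 (left_mem_Icc.mpr zero_le_one))
  have hrpow : IntervalIntegrable (fun x ↦ M * x ^ a) volume s 1 :=
    (intervalIntegral.intervalIntegrable_rpow' (by linarith)).const_mul M
  calc |dilationIntegral a g s| ≤ ∫ x in s..1, |x ^ a * g (s / x)| :=
        intervalIntegral.abs_integral_le_integral_abs hs.2
    _ ≤ ∫ x in s..1, M * x ^ a :=
        intervalIntegral.integral_mono_on hs.2
          (intervalIntegrable_rpow_mul_comp_div ha hg hgM hs).abs hrpow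
          fun x hx ↦ abs_rpow_mul_comp_div_le hs.1 hgM hx
    _ = M * (1 - s ^ (a + 1)) / (a + 1) := by
        rw [intervalIntegral.integral_const_mul, integral_rpow (Or.inl (by linarith)),
          Real.one_rpow, mul_div_assoc]
    _ ≤ M / (a + 1) := by
        gcongr
        exact mul_le_of_le_one_right hM (by linarith [Real.rpow_nonneg hs.1 (a + 1)])

lemma dilationIntegral_sub {f : ℝ → ℝ} {N : ℝ} (ha : 0 ≤ a) (hf : Measurable f)
    (hfN : ∀ t ∈ Icc (0 : ℝ) 1, |f t| ≤ N) (hg : Measurable g)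
    (hgM : ∀ t ∈ Icc (0 : ℝ) 1, |g t| ≤ M) (hs : s ∈ Icc (0 : ℝ) 1) :
    dilationIntegral a (f - g) s = dilationIntegral a f s - dilationIntegral a g s := by
  simp only [dilationIntegral, Pi.sub_apply, mul_sub]
  exact intervalIntegral.integral_sub (intervalIntegrable_rpow_mul_comp_div ha hf hfN hs)
    (intervalIntegrable_rpow_mul_comp_div ha hg hgM hs)

lemma rpow_two_mul_mul_rpow_div (hs : 0 ≤ s) {x : ℝ} (hx : s ≤ x) :
    x ^ (2 * a) * (s / x * (1 - s / x)) ^ a = s ^ a * (x - s) ^ a := by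
  have hx0 : 0 ≤ x := hs.trans hx
  have hsx : 0 ≤ s / x * (1 - s / x) :=
    mul_nonneg (div_nonneg hs hx0) (sub_nonneg.mpr (div_le_one_of_le₀ hx hx0))
  have hprod : x ^ 2 * (s / x * (1 - s / x)) = s * (x - s) := by
    rcases hx0.eq_or_lt with rfl | hxpos
    · simp [le_antisymm hx hs]
    · field_simp
  rw [Real.rpow_mul hx0, show x ^ (2 : ℝ) = x ^ 2 by norm_cast,
    ← Real.mul_rpow (by positivity) hsx, hprod, Real.mul_rpow hs (sub_nonneg.mpr hx)]

lemma dilationIntegral_rpow (ha : -1 < a) (hs : s ∈ Icc (0 : ℝ) 1) :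
    dilationIntegral (2 * a) (fun t ↦ (t * (1 - t)) ^ a) s
      = s ^ a * (1 - s) ^ (a + 1) / (a + 1) := by
  have hshift : ∫ x in s..1, (x - s) ^ a = ∫ x in (0 : ℝ)..(1 - s), x ^ a := by
    simpa using intervalIntegral.integral_comp_sub_right (fun x ↦ x ^ a) s (a := s) (b := 1)
  rw [dilationIntegral, intervalIntegral.integral_congr fun x hx ↦
      rpow_two_mul_mul_rpow_div hs.1 (uIcc_of_le hs.2 ▸ hx).1,
    intervalIntegral.integral_const_mul, hshift, integral_rpow (Or.inl ha),
    Real.zero_rpow (by linarith), sub_zero, mul_div_assoc]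

end DilationIntegral

/-- The linear part of `K`, with `a = 2β`. -/
noncomputable def dilationOperator (a : ℝ) (g : ℝ → ℝ) (s : ℝ) : ℝ :=
  2 / (a + 1) * (dilationIntegral a g s + dilationIntegral a g (1 - s))

section DilationOperator

variable {a s M : ℝ} {g : ℝ → ℝ}

lemma abs_dilationOperator_le (ha : 0 ≤ a) (hg : Measurable g)
    (hgM : ∀ t ∈ Icc (0 : ℝ) 1, |g t| ≤ M) (hs : s ∈ Icc (0 : ℝ) 1) :
    |dilationOperator a g s| ≤ 4 / (a + 1) ^ 2 * M := by
  have ha₁ : 0 < a + 1 := by linarith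
  calc |dilationOperator a g s|
      = 2 / (a + 1) * |dilationIntegral a g s + dilationIntegral a g (1 - s)| := by
        rw [dilationOperator, abs_mul, abs_of_pos (by positivity)]
    _ ≤ 2 / (a + 1) * (M / (a + 1) + M / (a + 1)) := by
        gcongr
        exact (abs_add_le _ _).trans (add_le_add (abs_dilationIntegral_le ha hg hgM hs)
          (abs_dilationIntegral_le ha hg hgM (Icc.one_sub_mem hs)))
    _ = 4 / (a + 1) ^ 2 * M := by
        field_simp
        ring

lemma dilationOperator_sub {f : ℝ → ℝ} {N : ℝ} (ha : 0 ≤ a) (hf : Measurable f)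
    (hfN : ∀ t ∈ Icc (0 : ℝ) 1, |f t| ≤ N) (hg : Measurable g)
    (hgM : ∀ t ∈ Icc (0 : ℝ) 1, |g t| ≤ M) (hs : s ∈ Icc (0 : ℝ) 1) :
    dilationOperator a (f - g) s = dilationOperator a f s - dilationOperator a g s := by
  simp only [dilationOperator, dilationIntegral_sub ha hf hfN hg hgM hs,
    dilationIntegral_sub ha hf hfN hg hgM (Icc.one_sub_mem hs)]
  ring

lemma dilationIntegral_const_mul (c : ℝ) :
    dilationIntegral a (fun t ↦ c * g t) s = c * dilationIntegral a g s := by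
  simp only [dilationIntegral, mul_left_comm _ c]
  exact intervalIntegral.integral_const_mul c _

lemma dilationOperator_rpow (ha : -1 < a) (hs : s ∈ Icc (0 : ℝ) 1) (c : ℝ) :
    dilationOperator (2 * a) (fun t ↦ c * (t * (1 - t)) ^ a) s
      = 2 / (2 * a + 1) * (c / (a + 1)) * (s * (1 - s)) ^ a := by
  have ha₁ : a + 1 ≠ 0 := by linarith
  simp only [dilationOperator, dilationIntegral_const_mul, dilationIntegral_rpow ha hs,
    dilationIntegral_rpow ha (Icc.one_sub_mem hs), sub_sub_cancel,
    Real.rpow_add_one' hs.1 ha₁, Real.rpow_add_one' (Icc.one_sub_mem hs).1 ha₁,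
    Real.mul_rpow hs.1 (Icc.one_sub_mem hs).1]
  ring

end DilationOperator

lemma K_eq_dilationOperator (f : ℝ → ℝ) (s : ℝ) :
    K f s = dilationOperator (2 * β) f s + 2 * Bfun (β + 1) (β + 1) * h s ^ 2 / (β + 1) := by
  have hreflect : ∫ x in (0 : ℝ)..s, (1 - x) ^ (2 * β) * f ((1 - s) / (1 - x))
      = dilationIntegral (2 * β) f (1 - s) := by
    simpa [dilationIntegral] using intervalIntegral.integral_comp_sub_left
      (fun y ↦ y ^ (2 * β) * f ((1 - s) / y)) 1 (a := 0) (b := s)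
  rw [K, hreflect]
  rfl

lemma K_sub_K {f g : ℝ → ℝ} {M N : ℝ} (hf : Measurable f)
    (hfN : ∀ t ∈ Icc (0 : ℝ) 1, |f t| ≤ N) (hg : Measurable g)
    (hgM : ∀ t ∈ Icc (0 : ℝ) 1, |g t| ≤ M) {s : ℝ} (hs : s ∈ Icc (0 : ℝ) 1) :
    K f s - K g s = dilationOperator (2 * β) (f - g) s := by
  rw [K_eq_dilationOperator, K_eq_dilationOperator,
    dilationOperator_sub (by linarith [β_pos]) hf hfN hg hgM hs]
  ring

lemma h_sq {s : ℝ} (hs : s ∈ Icc (0 : ℝ) 1) : h s ^ 2 = (s * (1 - s)) ^ β := by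
  rw [h, ← Real.rpow_mul_natCast (mul_nonneg hs.1 (Icc.one_sub_mem hs).1)]
  norm_num

/-- `c₂` solves the scalar fixed-point equation because `(2β + 1)(β + 1) - 2 = 3(1 - β)`,
which is `β² + 3β = 2`. -/
lemma c₂_fixed_point :
    2 / (2 * β + 1) * (c₂ / (β + 1)) + 2 * Bfun (β + 1) (β + 1) / (β + 1) = c₂ := by
  have h₁ : 2 * β + 1 ≠ 0 := by linarith [β_pos]
  have h₂ : β + 1 ≠ 0 := by linarith [β_pos]
  have h₃ : 1 - β ≠ 0 := by linarith [β_lt_one]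
  rw [c₂]
  field_simp
  linear_combination (-2 * Bfun (β + 1) (β + 1)) * β_sq_add_three_mul

noncomputable def secondMomentSolution (t : ℝ) : ℝ := c₂ * (t * (1 - t)) ^ β

lemma K_secondMomentSolution {s : ℝ} (hs : s ∈ Icc (0 : ℝ) 1) :
    K secondMomentSolution s = secondMomentSolution s := by
  rw [K_eq_dilationOperator,
    show secondMomentSolution = fun t ↦ c₂ * (t * (1 - t)) ^ β from rfl,
    dilationOperator_rpow (by linarith [β_pos]) hs, h_sq hs]
  linear_combination (s * (1 - s)) ^ β * c₂_fixed_point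

lemma measurable_secondMomentSolution : Measurable secondMomentSolution := by
  unfold secondMomentSolution; fun_prop

lemma abs_secondMomentSolution_le {t : ℝ} (ht : t ∈ Icc (0 : ℝ) 1) :
    |secondMomentSolution t| ≤ |c₂| := by
  have h₀ : 0 ≤ t * (1 - t) := mul_nonneg ht.1 (Icc.one_sub_mem ht).1
  have h₁ : t * (1 - t) ≤ 1 := by nlinarith [ht.1, ht.2]
  rw [secondMomentSolution, abs_mul, abs_of_nonneg (Real.rpow_nonneg h₀ β)]
  exact mul_le_of_le_one_right (abs_nonneg c₂) (Real.rpow_le_one h₀ h₁ β_pos.le)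

/-- Uniqueness: any bounded measurable solution of `K f = f` on `[0,1]` equals
`s ↦ c₂ (s(1-s))^β` there. -/
theorem second_moment_fixed_point_unique (f : ℝ → ℝ) (hf : Measurable f)
    (hfb : ∃ M, ∀ t ∈ Set.Icc (0 : ℝ) 1, |f t| ≤ M)
    (hfix : ∀ s ∈ Set.Icc (0 : ℝ) 1, K f s = f s) :
    ∀ s ∈ Set.Icc (0 : ℝ) 1, f s = c₂ * (s * (1 - s)) ^ β := by
  obtain ⟨M, hM⟩ := hfb
  set g := f - secondMomentSolution with hg
  have hg_meas : Measurable g := hf.sub measurable_secondMomentSolution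
  have hg_bdd : ∀ t ∈ Icc (0 : ℝ) 1, |g t| ≤ M + |c₂| := fun t ht ↦
    (abs_sub _ _).trans (add_le_add (hM t ht) (abs_secondMomentSolution_le ht))
  have hg_eq : ∀ s ∈ Icc (0 : ℝ) 1, g s = dilationOperator (2 * β) g s := fun s hs ↦ by
    rw [hg, ← K_sub_K hf hM measurable_secondMomentSolution
      (fun _ ↦ abs_secondMomentSolution_le) hs, hfix s hs, K_secondMomentSolution hs, Pi.sub_apply]
  have hg_zero := eq_zero_of_forall_abs_le_mul (by positivity)
    four_div_two_mul_β_add_one_sq_lt_one ⟨_, hg_bdd⟩ fun N hN s hs ↦ by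
      rw [hg_eq s hs]
      exact abs_dilationOperator_le (by linarith [β_pos]) hg_meas hN hs
  intro s hs
  exact sub_eq_zero.mp (hg_zero s hs)
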